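/- Let $(C,D)$ be a regular MASA inclusion, let $B$ be a unital commutative complex Banach algebra, and for $i = 1,2$ let $\Delta_i : C \to B$ be bounded linear $D$-modular maps (i.e., $\Delta_i(xd) = \Delta_i(x)\Delta_i(d)$ and $\Delta_i(dx) = \Delta_i(d)\Delta_i(x)$ for all $x \in C$, $d \in D$) such that $\Delta_1|_D = \Delta_2|_D =: \iota$. If $\iota$ is $D$-thick in $B$, i.e., for every nonzero $b \in B$ there exists a nonzero $h \in D$ such that $hd = 0$ for every $d \in D$ with $b\,\iota(d) = 0$, then $\Delta_1 = \Delta_2$. -/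

import Mathlib

/-- `v` is a normalizer of the subset `S`:  `v* S v ⊆ S` and `v S v* ⊆ S`. -/
def IsNormalizer {C : Type*} [Mul C] [Star C] (S : Set C) (v : C) : Prop :=
  ∀ d ∈ S, star v * d * v ∈ S ∧ v * d * star v ∈ S

/-! Fix a normalizer `v` and suppose `b := Δ₁ v - Δ₂ v ≠ 0`; thickness yields `h ≠ 0` in `D`
killing every `d ∈ D` with `b * ι d = 0`. Applying both maps to `v (d v⋆v) = (v d v⋆) v` shows
that `h` kills `d v⋆v - v d v⋆`, so `h v` commutes with `D` on the elements `v (d v⋆v)`. These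
approximate `v`: with `a = v⋆v` and `z = 1 - a / ‖a‖`, the C⋆-identity and the spectral bound
give `‖v z^k‖² = ‖a z^(2k)‖ ≤ ‖a‖ / (2k)`, and `1 - z^k` is a multiple of `a` in `D`. Hence
`h v` commutes with `D` and lies in `D` by maximality. Then `Δ₁ (h v) = Δ₂ (h v)` gives
`b * ι h = 0`, hence `h * h = 0`, which is impossible for a nonzero normal element of a
C⋆-algebra. Regularity and continuity extend `Δ₁ v = Δ₂ v` from normalizers to all of `C`. -/

lemma IsNormalizer.star_mul_self_mem {C : Type*} [MulOneClass C] [Star C] {S : Set C} {v : C}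
    (hv : IsNormalizer S v) (hS : 1 ∈ S) : star v * v ∈ S := by
  simpa using (hv 1 hS).1

lemma IsStarNormal.eq_zero_of_mul_self_eq_zero {E : Type*} [NonUnitalNormedRing E] [StarRing E]
    [CStarRing E] {x : E} [hx : IsStarNormal x] (hsq : x * x = 0) : x = 0 := by
  rw [← CStarRing.star_mul_self_eq_zero_iff, ← CStarRing.star_mul_self_eq_zero_iff, star_mul,
    star_star]
  calc star x * x * (star x * x) = star x * (x * star x) * x := by noncomm_ring
    _ = star x * star x * (x * x) := by rw [← hx.star_comm_self.eq]; noncomm_ring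
    _ = 0 := by rw [hsq, mul_zero]

section Modular

variable {C B F : Type*} [Ring C] [StarRing C] [Algebra ℂ C] [StarModule ℂ C] [CommRing B]
  [FunLike F C B] {D : StarSubalgebra ℂ C} {Δ₁ Δ₂ : F}

lemma sub_mul_map_conj_sub_eq_zero [AddMonoidHomClass F C B]
    (hmod₁ : ∀ x : C, ∀ d ∈ D, Δ₁ (x * d) = Δ₁ x * Δ₁ d ∧ Δ₁ (d * x) = Δ₁ d * Δ₁ x)
    (hmod₂ : ∀ x : C, ∀ d ∈ D, Δ₂ (x * d) = Δ₂ x * Δ₂ d ∧ Δ₂ (d * x) = Δ₂ d * Δ₂ x)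
    (hagree : ∀ d ∈ D, Δ₁ d = Δ₂ d)
    {v : C} (hv : IsNormalizer (D : Set C) v) {d : C} (hd : d ∈ D) :
    (Δ₁ v - Δ₂ v) * Δ₁ (d * (star v * v) - v * d * star v) = 0 := by
  have hda : d * (star v * v) ∈ D := mul_mem hd (hv.star_mul_self_mem (one_mem D))
  have hvd : v * d * star v ∈ D := (hv d hd).2
  have hconj : v * (d * (star v * v)) = v * d * star v * v := by noncomm_ring
  have e₁ := congrArg Δ₁ hconj
  have e₂ := congrArg Δ₂ hconj
  rw [(hmod₁ v _ hda).1, (hmod₁ v _ hvd).2] at e₁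
  rw [(hmod₂ v _ hda).1, (hmod₂ v _ hvd).2, ← hagree _ hda, ← hagree _ hvd] at e₂
  rw [map_sub]
  linear_combination e₁ - e₂

lemma sub_mul_map_eq_zero_of_mul_mem
    (hmod₁ : ∀ x : C, ∀ d ∈ D, Δ₁ (x * d) = Δ₁ x * Δ₁ d ∧ Δ₁ (d * x) = Δ₁ d * Δ₁ x)
    (hmod₂ : ∀ x : C, ∀ d ∈ D, Δ₂ (x * d) = Δ₂ x * Δ₂ d ∧ Δ₂ (d * x) = Δ₂ d * Δ₂ x)
    (hagree : ∀ d ∈ D, Δ₁ d = Δ₂ d)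
    {h v : C} (hh : h ∈ D) (hhv : h * v ∈ D) :
    (Δ₁ v - Δ₂ v) * Δ₁ h = 0 := by
  have e := hagree _ hhv
  rw [(hmod₁ v h hh).2, (hmod₂ v h hh).2, ← hagree h hh] at e
  linear_combination e

end Modular

lemma natCast_mul_mul_one_sub_pow_le_one (m : ℕ) {u : ℝ} (h0 : 0 ≤ u) (h1 : u ≤ 1) :
    m * (u * (1 - u) ^ m) ≤ 1 := by
  have hpow : 0 ≤ (1 - u) ^ m := pow_nonneg (by linarith) m
  calc m * (u * (1 - u) ^ m) ≤ (1 + m * u) * (1 - u) ^ m := by nlinarith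
    _ ≤ (1 + u) ^ m * (1 - u) ^ m :=
      mul_le_mul_of_nonneg_right (one_add_mul_le_pow (by linarith) m) hpow
    _ = (1 - u ^ 2) ^ m := by rw [← mul_pow]; ring
    _ ≤ 1 := pow_le_one₀ (by nlinarith) (by nlinarith)

section CStarAlgebra

variable {C : Type*} [CStarAlgebra C]

lemma natCast_mul_norm_mul_pow_sq_le (v : C) (k : ℕ) :
    (2 * k : ℝ) * ‖v * (1 - ‖star v * v‖⁻¹ • (star v * v)) ^ k‖ ^ 2 ≤ ‖star v * v‖ := by
  nontriviality C
  set a := star v * v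
  set M := ‖a‖
  set z := 1 - M⁻¹ • a
  have hz : z = cfc (fun t : ℝ => 1 - M⁻¹ * t) a := by
    rw [cfc_sub .., cfc_const_one .., cfc_const_mul .., cfc_id' ..]
  have hnorm : ‖v * z ^ k‖ ^ 2 =
      ‖cfc (fun t : ℝ => (1 - M⁻¹ * t) ^ k * (t * (1 - M⁻¹ * t) ^ k)) a‖ := by
    rw [sq, ← CStarRing.norm_star_mul_self, cfc_mul .., cfc_mul .., cfc_pow .., cfc_id' .., ← hz,
      star_mul, star_pow, hz, (cfc_predicate (R := ℝ) (fun t => 1 - M⁻¹ * t) a).star_eq]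
    simp only [a, mul_assoc]
  rcases k.eq_zero_or_pos with rfl | hk
  · simp [M]
  rw [hnorm, ← le_div_iff₀' (by positivity)]
  refine norm_cfc_le (by positivity) fun t ht => ?_
  have ht0 : 0 ≤ t := spectrum_star_mul_self_nonneg t ht
  have htM : t ≤ M := Real.norm_of_nonneg ht0 ▸ spectrum.norm_le_norm_of_mem ht
  set u := M⁻¹ * t
  have htu : t = M * u := by
    rcases (norm_nonneg a).eq_or_lt with hM | hM
    · simp only [u, M, ← hM] at htM ⊢; linarith
    · simp only [u, M, mul_inv_cancel_left₀ hM.ne']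
  have hu0 : 0 ≤ u := by positivity
  have hu1 : u ≤ 1 := inv_mul_le_one_of_le₀ htM (norm_nonneg a)
  have key := natCast_mul_mul_one_sub_pow_le_one (2 * k) hu0 hu1
  rw [Real.norm_of_nonneg (by positivity), le_div_iff₀' (by positivity)]
  push_cast at key
  calc 2 * k * ((1 - u) ^ k * (t * (1 - u) ^ k)) = M * (2 * k * (u * (1 - u) ^ (2 * k))) := by
        rw [htu]; ring
    _ ≤ M := mul_le_of_le_one_right (norm_nonneg a) key

lemma mem_closure_image_mul_mul_star_mul_self (D : Subalgebra ℂ C) {v : C}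
    (hv : star v * v ∈ D) : v ∈ closure ((fun d => v * (d * (star v * v))) '' D) := by
  set a := star v * v
  set M := ‖a‖
  set z := 1 - M⁻¹ • a
  have real_smul_mem : ∀ x ∈ D, M⁻¹ • x ∈ D := fun x hx => by
    simpa only [Complex.coe_smul] using D.smul_mem hx ((M⁻¹ : ℝ) : ℂ)
  have hzD : z ∈ D := sub_mem (one_mem D) (real_smul_mem a hv)
  rw [Metric.mem_closure_iff]
  intro ε hε
  obtain ⟨k, hk⟩ := exists_nat_gt (M / (2 * ε ^ 2))
  refine ⟨_, ⟨M⁻¹ • ∑ i ∈ Finset.range k, z ^ i,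
    real_smul_mem _ (sum_mem fun i _ => pow_mem hzD i), rfl⟩, ?_⟩
  have hgeom : (M⁻¹ • ∑ i ∈ Finset.range k, z ^ i) * a = 1 - z ^ k := by
    rw [smul_mul_assoc, ← mul_smul_comm, ← geom_sum_mul_neg, sub_sub_cancel]
  dsimp only
  rw [dist_eq_norm, hgeom, mul_sub, mul_one, sub_sub_cancel]
  have hbound : 2 * k * ‖v * z ^ k‖ ^ 2 ≤ M := natCast_mul_norm_mul_pow_sq_le v k
  rw [div_lt_iff₀ (by positivity)] at hk
  refine lt_of_pow_lt_pow_left₀ 2 hε.le ?_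
  nlinarith [norm_nonneg a]

variable {D : StarSubalgebra ℂ C}

lemma commute_mul_of_mul_conj_sub_eq_zero (hDcomm : ∀ a ∈ D, ∀ b ∈ D, a * b = b * a) {v h : C}
    (hv : IsNormalizer (D : Set C) v) (hh : h ∈ D)
    (hann : ∀ d ∈ D, h * (d * (star v * v) - v * d * star v) = 0) (e : C) (he : e ∈ D) :
    h * v * e = e * (h * v) := by
  have ha := hv.star_mul_self_mem (one_mem D)
  have hswap : ∀ d ∈ D, h * (v * (d * (star v * v))) = h * (d * (star v * v)) * v := by
    intro d hd
    have hd' := hann d hd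
    rw [mul_sub, sub_eq_zero] at hd'
    rw [hd']
    simp only [mul_assoc]
  have hclosed : IsClosed {y : C | h * y * e = e * (h * y)} :=
    isClosed_eq (by fun_prop) (by fun_prop)
  refine hclosed.closure_subset_iff.mpr ?_
    (mem_closure_image_mul_mul_star_mul_self D.toSubalgebra ha)
  rintro _ ⟨d, hd, rfl⟩
  have hde : d * e ∈ D := mul_mem hd he
  calc h * (v * (d * (star v * v))) * e = h * (v * (d * e * (star v * v))) := by
        simp only [mul_assoc, hDcomm _ ha e he]
    _ = e * (h * (d * (star v * v))) * v := by
        rw [hswap _ hde, hDcomm d hd e he, mul_assoc e, ← mul_assoc h e, hDcomm h hh e he]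
        simp only [mul_assoc]
    _ = e * (h * (v * (d * (star v * v)))) := by
        rw [hswap d hd, mul_assoc]

end CStarAlgebra

theorem modular_maps_agree_general
    {C : Type*} [NormedRing C] [StarRing C] [CStarRing C] [NormedAlgebra ℂ C]
    [CompleteSpace C] [StarModule ℂ C]
    {B : Type*} [NormedCommRing B] [NormedAlgebra ℂ B]
    (D : StarSubalgebra ℂ C)
    (hDcomm : ∀ a ∈ D, ∀ b ∈ D, a * b = b * a)
    -- `D` is a MASA in `C`
    (hmasa : ∀ x : C, (∀ d ∈ D, x * d = d * x) → x ∈ D)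
    -- regularity: the span of the normalizers is dense in `C`
    (hreg : Dense
      ((Submodule.span ℂ {v : C | IsNormalizer (D : Set C) v} : Submodule ℂ C) : Set C))
    (Δ₁ Δ₂ : C →L[ℂ] B)
    -- `Δ₁` and `Δ₂` are `D`-modular
    (hmod₁ : ∀ x : C, ∀ d ∈ D, Δ₁ (x * d) = Δ₁ x * Δ₁ d ∧ Δ₁ (d * x) = Δ₁ d * Δ₁ x)
    (hmod₂ : ∀ x : C, ∀ d ∈ D, Δ₂ (x * d) = Δ₂ x * Δ₂ d ∧ Δ₂ (d * x) = Δ₂ d * Δ₂ x)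
    -- `Δ₁` and `Δ₂` agree on `D`
    (hagree : ∀ d ∈ D, Δ₁ d = Δ₂ d)
    -- the common restriction `ι = Δ₁|_D` is `D`-thick in `B`
    (hthick : ∀ b : B, b ≠ 0 → ∃ h ∈ D, h ≠ 0 ∧ ∀ d ∈ D, b * Δ₁ d = 0 → h * d = 0) :
    Δ₁ = Δ₂ := by
  let : CStarAlgebra C := {}
  refine ContinuousLinearMap.ext_on hreg fun v hv => ?_
  by_contra hne
  obtain ⟨h, hh, hh0, hann⟩ := hthick _ (sub_ne_zero.mpr hne)
  have hcomm : ∀ e ∈ D, h * v * e = e * (h * v) :=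
    commute_mul_of_mul_conj_sub_eq_zero hDcomm hv hh fun d hd =>
      hann _ (sub_mem (mul_mem hd (hv.star_mul_self_mem (one_mem D))) (hv d hd).2)
        (sub_mul_map_conj_sub_eq_zero hmod₁ hmod₂ hagree hv hd)
  have hsq : h * h = 0 :=
    hann h hh (sub_mul_map_eq_zero_of_mul_mem hmod₁ hmod₂ hagree hh (hmasa _ hcomm))
  have : IsStarNormal h := ⟨hDcomm _ (star_mem hh) _ hh⟩
  exact hh0 (IsStarNormal.eq_zero_of_mul_self_eq_zero hsq)

/-- Let `(C,D)` be a regular MASA inclusion, `B` a unital commutative complex Banach algebra,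
and `Δ₁, Δ₂ : C → B` bounded `D`-modular linear maps agreeing on `D` whose common restriction
`ι = Δᵢ|_D` is `D`-thick in `B`.  Then `Δ₁ = Δ₂`. -/
theorem modular_maps_agree
    {C : Type*} [NormedRing C] [StarRing C] [CStarRing C] [NormedAlgebra ℂ C]
    [CompleteSpace C] [StarModule ℂ C]
    {B : Type*} [NormedCommRing B] [NormedAlgebra ℂ B] [CompleteSpace B]
    (D : StarSubalgebra ℂ C) (hDclosed : IsClosed (D : Set C))
    (hDcomm : ∀ a ∈ D, ∀ b ∈ D, a * b = b * a)
    -- `D` is a MASA in `C`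
    (hmasa : ∀ x : C, (∀ d ∈ D, x * d = d * x) → x ∈ D)
    -- regularity: the span of the normalizers is dense in `C`
    (hreg : Dense
      ((Submodule.span ℂ {v : C | IsNormalizer (D : Set C) v} : Submodule ℂ C) : Set C))
    (Δ₁ Δ₂ : C →L[ℂ] B)
    -- `Δ₁` and `Δ₂` are `D`-modular
    (hmod₁ : ∀ x : C, ∀ d ∈ D, Δ₁ (x * d) = Δ₁ x * Δ₁ d ∧ Δ₁ (d * x) = Δ₁ d * Δ₁ x)
    (hmod₂ : ∀ x : C, ∀ d ∈ D, Δ₂ (x * d) = Δ₂ x * Δ₂ d ∧ Δ₂ (d * x) = Δ₂ d * Δ₂ x)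
    -- `Δ₁` and `Δ₂` agree on `D`
    (hagree : ∀ d ∈ D, Δ₁ d = Δ₂ d)
    -- the common restriction `ι = Δ₁|_D` is `D`-thick in `B`
    (hthick : ∀ b : B, b ≠ 0 → ∃ h ∈ D, h ≠ 0 ∧ ∀ d ∈ D, b * Δ₁ d = 0 → h * d = 0) :
    Δ₁ = Δ₂ :=
  modular_maps_agree_general D hDcomm hmasa hreg Δ₁ Δ₂ hmod₁ hmod₂ hagree hthick
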